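/- (Closed-form recovery for a fully-connected layer.) Let x ∈ ℝ^m, W ∈ ℝ^{n×m}, b ∈ ℝ^n, and let f : ℝ^n → ℝ be Fréchet differentiable with gradient vector r = ∇f(Wx + b) ∈ ℝ^n. Define the loss L(W,b) = f(Wx + b). Then the gradient matrices satisfy ∇_W L = r xᵀ and ∇_b L = r; consequently, for any index i with r_i ≠ 0, the input is recovered exactly as x_j = (∇_W L)_{ij} / (∇_b L)_i for every j. -/

import Mathlib

/-!
By the chain rule, the derivative of `W' ↦ f (W' x + b)` at `W` is `H ↦ ⟪r, H x⟫`, and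
`⟪r, H x⟫ = trace ((r xᵀ)ᵀ H)`; since the Frobenius pairing is nondegenerate, the gradient
matrix is `r xᵀ`. Likewise the derivative in `b` is `⟪r, ·⟫`, so the bias gradient is `r`.
-/

open Matrix

attribute [local instance] Matrix.normedAddCommGroup Matrix.normedSpace

noncomputable section

/-- `G` is the gradient matrix of the scalar function `F` at `X`:
it represents the Fréchet derivative of `F` at `X` via the Frobenius
inner product, `(dF)(H) = trace (Gᵀ * H)`. -/
def HasGradientMatrixAt {α β : Type*} [Fintype α] [Fintype β]
    (F : Matrix α β ℝ → ℝ) (G : Matrix α β ℝ) (X : Matrix α β ℝ) : Prop :=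
  ∃ D : Matrix α β ℝ →L[ℝ] ℝ, HasFDerivAt F D X ∧ ∀ H, D H = Matrix.trace (Gᵀ * H)

/-- `r` is the gradient vector of the scalar function `F` at `x`:
it represents the Fréchet derivative of `F` at `x` via the Euclidean
inner product, `(dF)(h) = ∑ i, r i * h i`. -/
def HasGradientVecAt {ι : Type*} [Fintype ι]
    (F : (ι → ℝ) → ℝ) (r : ι → ℝ) (x : ι → ℝ) : Prop :=
  ∃ D : (ι → ℝ) →L[ℝ] ℝ, HasFDerivAt F D x ∧ ∀ h, D h = ∑ i, r i * h i

section Gradient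

variable {ι α β : Type*} [Fintype ι] [Fintype α] [Fintype β]

theorem HasGradientMatrixAt.unique {F : Matrix α β ℝ → ℝ} {G G' X : Matrix α β ℝ}
    (hG : HasGradientMatrixAt F G X) (hG' : HasGradientMatrixAt F G' X) : G = G' := by
  obtain ⟨D, hD, hDG⟩ := hG
  obtain ⟨D', hD', hDG'⟩ := hG'
  have hDD' : D = D' := hD.unique hD'
  rw [← transpose_inj, ext_iff_trace_mul_right]
  intro H
  rw [← hDG, ← hDG', hDD']

theorem HasGradientVecAt.unique {F : (ι → ℝ) → ℝ} {r r' x : ι → ℝ}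
    (hr : HasGradientVecAt F r x) (hr' : HasGradientVecAt F r' x) : r = r' := by
  classical
  obtain ⟨D, hD, hDr⟩ := hr
  obtain ⟨D', hD', hDr'⟩ := hr'
  have hDD' : D = D' := hD.unique hD'
  have hpair : ∀ h : ι → ℝ, ∑ i, r i * h i = ∑ i, r' i * h i := fun h => by
    rw [← hDr, ← hDr', hDD']
  funext i
  simpa [Pi.single_apply] using hpair (Pi.single i 1)

theorem HasGradientVecAt.comp_const_add {f : (ι → ℝ) → ℝ} {r a b : ι → ℝ}
    (hr : HasGradientVecAt f r (a + b)) : HasGradientVecAt (fun b' => f (a + b')) r b := by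
  obtain ⟨D, hD, hDr⟩ := hr
  refine ⟨D, ?_, hDr⟩
  rw [← D.comp_id]
  exact hD.comp b ((hasFDerivAt_id b).const_add a)

theorem sum_mul_mulVec_eq_trace (r : α → ℝ) (x : β → ℝ) (H : Matrix α β ℝ) :
    ∑ i, r i * (H *ᵥ x) i = trace ((vecMulVec r x)ᵀ * H) := by
  rw [transpose_vecMulVec, vecMulVec_mul, trace_vecMulVec, dotProduct_comm, ← dotProduct_mulVec]
  rfl

theorem HasGradientVecAt.comp_mulVec_add {f : (α → ℝ) → ℝ} {r b : α → ℝ} {x : β → ℝ}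
    {W : Matrix α β ℝ} (hr : HasGradientVecAt f r (W *ᵥ x + b)) :
    HasGradientMatrixAt (fun W' => f (W' *ᵥ x + b)) (vecMulVec r x) W := by
  obtain ⟨D, hD, hDr⟩ := hr
  let applyTo : Matrix α β ℝ →L[ℝ] α → ℝ :=
    ((mulVecBilin ℝ ℝ).flip x).toContinuousLinearMap
  refine ⟨D.comp applyTo, hD.comp W (applyTo.hasFDerivAt.add_const b), fun H => ?_⟩
  rw [ContinuousLinearMap.comp_apply, hDr, ← sum_mul_mulVec_eq_trace]
  rfl

end Gradient

theorem fc_layer_closed_form_recovery_general {m n : ℕ}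
    (x : Fin m → ℝ) (W : Matrix (Fin n) (Fin m) ℝ) (b : Fin n → ℝ)
    (f : (Fin n → ℝ) → ℝ)
    (r : Fin n → ℝ) (hr : HasGradientVecAt f r (W.mulVec x + b))
    (GW : Matrix (Fin n) (Fin m) ℝ) (gb : Fin n → ℝ)
    (hGW : HasGradientMatrixAt (fun W' : Matrix (Fin n) (Fin m) ℝ =>
      f (W'.mulVec x + b)) GW W)
    (hgb : HasGradientVecAt (fun b' => f (W.mulVec x + b')) gb b) :
    GW = Matrix.vecMulVec r x ∧ gb = r ∧
    ∀ i, r i ≠ 0 → ∀ j, x j = GW i j / gb i := by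
  have hGW_eq : GW = vecMulVec r x := hGW.unique hr.comp_mulVec_add
  have hgb_eq : gb = r := hgb.unique hr.comp_const_add
  refine ⟨hGW_eq, hgb_eq, fun i hi j => ?_⟩
  rw [hGW_eq, hgb_eq, vecMulVec_apply, mul_div_cancel_left₀ _ hi]

theorem fc_layer_closed_form_recovery {m n : ℕ} (hm : 0 < m) (hn : 0 < n)
    (x : Fin m → ℝ) (W : Matrix (Fin n) (Fin m) ℝ) (b : Fin n → ℝ)
    (f : (Fin n → ℝ) → ℝ) (hf : Differentiable ℝ f)
    (r : Fin n → ℝ) (hr : HasGradientVecAt f r (W.mulVec x + b))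
    (GW : Matrix (Fin n) (Fin m) ℝ) (gb : Fin n → ℝ)
    (hGW : HasGradientMatrixAt (fun W' : Matrix (Fin n) (Fin m) ℝ =>
      f (W'.mulVec x + b)) GW W)
    (hgb : HasGradientVecAt (fun b' => f (W.mulVec x + b')) gb b) :
    GW = Matrix.vecMulVec r x ∧ gb = r ∧
    ∀ i, r i ≠ 0 → ∀ j, x j = GW i j / gb i :=
  fc_layer_closed_form_recovery_general x W b f r hr GW gb hGW hgb
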